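/- arXiv:2010.14017 — 6 statements merged into one kernel-verified Lean document; each statement's English description precedes it below -/
import Mathlib

section
/- Let n ≥ 1 be an integer, 0 < α < n and 1 < p < q < ∞. If there exists a constant C such that ‖I_α f‖_{L^q(ℝ^{n+1})} ≤ C ‖f‖_{L^p(ℝ^{n+1})} for every nonnegative measurable f ∈ L^p(ℝ^{n+1}), then α/n = 1/p − 1/q. -/
open MeasureTheory ENNReal NNReal

noncomputable section

/-- `ℝ^{n+1}` as `ℝ^n × ℝ`. -/
abbrev Pt (n : ℕ) := EuclideanSpace ℝ (Fin n) × ℝ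

/-- The open light cone `Λ = {(y,s) : |s| > |y|}`. -/
def lightCone (n : ℕ) : Set (Pt n) := {p | ‖p.1‖ < |p.2|}

/-- The integrand `f(x−y, t−s) (|s|+|y|)^{α−n} (|s|−|y|)^{α/n−1}`. -/
def ker (n : ℕ) (α : ℝ) (f : Pt n → ℝ) (z p : Pt n) : ℝ≥0∞ :=
  ENNReal.ofReal (f (z.1 - p.1, z.2 - p.2)) *
    ENNReal.ofReal ((|p.2| + ‖p.1‖) ^ (α - n) * (|p.2| - ‖p.1‖) ^ (α / n - 1))

/-- The light-cone fractional integral `I_α f`. -/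
def Iop (n : ℕ) (α : ℝ) (f : Pt n → ℝ) (z : Pt n) : ℝ≥0∞ :=
  ∫⁻ p in lightCone n, ker n α f z p

/-- The shifted cone shell `Λ_{ℓj}(x,t)`. -/
def shellAt (n : ℕ) (ℓ j : ℤ) (c : Pt n) : Set (Pt n) :=
  {p | (2:ℝ) ^ j ≤ |p.2 - c.2| + ‖p.1 - c.1‖ ∧ |p.2 - c.2| + ‖p.1 - c.1‖ < (2:ℝ) ^ (j + 1) ∧
       (2:ℝ) ^ (j - ℓ) ≤ |p.2 - c.2| - ‖p.1 - c.1‖ ∧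
       |p.2 - c.2| - ‖p.1 - c.1‖ < (2:ℝ) ^ (j - ℓ + 1)}

/-- The dyadic enlargement `Λ*_{ℓj}(x,t)`. -/
def shellStarAt (n : ℕ) (ℓ j : ℤ) (c : Pt n) : Set (Pt n) :=
  {p | (2:ℝ) ^ (j - 3) ≤ |p.2 - c.2| + ‖p.1 - c.1‖ ∧
       |p.2 - c.2| + ‖p.1 - c.1‖ < (2:ℝ) ^ (j + 3) ∧
       (2:ℝ) ^ (j - ℓ - 3) ≤ |p.2 - c.2| - ‖p.1 - c.1‖ ∧
       |p.2 - c.2| - ‖p.1 - c.1‖ < (2:ℝ) ^ (j - ℓ + 3)}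

/-- The cone shell `Λ_{ℓj}` (centered at the origin). -/
def shell (n : ℕ) (ℓ j : ℤ) : Set (Pt n) := shellAt n ℓ j 0

/-- The discrete dyadic cone `Λ_ℓ = ⋃_j Λ_{ℓj}`. -/
def Lam (n : ℕ) (ℓ : ℤ) : Set (Pt n) := ⋃ j : ℤ, shell n ℓ j

/-- The partial operator `Δ_{ℓj} I_α f`. -/
def Dlj (n : ℕ) (α : ℝ) (ℓ j : ℤ) (f : Pt n → ℝ) (z : Pt n) : ℝ≥0∞ :=
  ∫⁻ p in shell n ℓ j, ker n α f z p

/-- The partial operator `Δ_ℓ I_α f`. -/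
def Dl (n : ℕ) (α : ℝ) (ℓ : ℤ) (f : Pt n → ℝ) (z : Pt n) : ℝ≥0∞ :=
  ∫⁻ p in Lam n ℓ, ker n α f z p

/-- `θ_ℓ(x,t) = ‖f‖_p^{−p} ∬_{Λ_ℓ} f(x−y,t−s)^p dy ds`. -/
def theta (n : ℕ) (p : ℝ) (f : Pt n → ℝ) (ℓ : ℤ) (z : Pt n) : ℝ≥0∞ :=
  (∫⁻ w in Lam n ℓ, ENNReal.ofReal (f (z.1 - w.1, z.2 - w.2)) ^ p) /
    eLpNorm f (ENNReal.ofReal p) volume ^ p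

/-- The cone of directions `Γ^ν_η` with central direction `e`. -/
def coneDir (n η : ℕ) (e : EuclideanSpace ℝ (Fin n)) : Set (EuclideanSpace ℝ (Fin n)) :=
  {y | y ≠ 0 ∧ ‖(‖y‖⁻¹ • y) - e‖ ≤ 4 * (2:ℝ) ^ (-(η:ℝ))}

/-- The directional maximal operator `M^ν_η`. -/
def Mnu (n η : ℕ) (e : EuclideanSpace ℝ (Fin n)) (f : Pt n → ℝ) (z : Pt n) : ℝ≥0∞ :=
  ⨆ (ℓ : ℕ) (_ : ℓ ≤ η) (j : ℤ),
    (ENNReal.ofReal ((2:ℝ) ^ j * (2:ℝ) ^ (j - (ℓ:ℤ)) * (2:ℝ) ^ ((j - (η:ℤ)) * ((n:ℤ) - 1))))⁻¹ *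
      ∫⁻ p in {p : Pt n | p ∈ shell n ℓ j ∧ p.1 ∈ coneDir n η e},
        ENNReal.ofReal (f (z.1 - p.1, z.2 - p.2))

/-- The averaged maximal operator `M_η`. -/
def Meta (n η : ℕ) {ι : Type} [Fintype ι] (y : ι → EuclideanSpace ℝ (Fin n)) (f : Pt n → ℝ)
    (z : Pt n) : ℝ≥0∞ :=
  (ENNReal.ofReal ((2:ℝ) ^ ((η:ℤ) * ((n:ℤ) - 1))))⁻¹ * ∑ ν, Mnu n η (y ν) f z

/-- `Ω^α(x,t) = (|t|+|x|)^{α−n} (|t|−|x|)^{α/n−1}`. -/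
def Om (n : ℕ) (α : ℝ) (p : Pt n) : ℝ≥0∞ :=
  ENNReal.ofReal ((|p.2| + ‖p.1‖) ^ (α - n) * (|p.2| - ‖p.1‖) ^ (α / n - 1))

/-! Scaling. Since `Ω^α` is homogeneous of degree `α - n + (α/n - 1)`, the dilate
`f_l = f(l ·)` satisfies `I_α f_l = l^{-(α + α/n)} (I_α f)(l ·)`, hence
`‖I_α f_l‖_q = l^{-(α + α/n) - (n+1)/q} ‖I_α f‖_q` while `‖f_l‖_p = l^{-(n+1)/p} ‖f‖_p`.
Applying the bound to every `f_l`, with `f` the indicator of a ball (for which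
`0 < ‖I_α f‖_q` and `‖f‖_p < ∞`), shows that `l^E` stays bounded for
`E = (n+1)/p - (n+1)/q - (α + α/n)`, so `E = 0`, which is `α/n = 1/p - 1/q`. -/

open Metric Module

section Dilation

variable {E : Type*} [NormedAddCommGroup E] [NormedSpace ℝ E] [MeasurableSpace E] [BorelSpace E]
  [FiniteDimensional ℝ E] (μ : Measure E) [μ.IsAddHaarMeasure] {r : ℝ}

theorem lintegral_comp_smul_of_pos (hr : 0 < r) (g : E → ℝ≥0∞) :
    ∫⁻ x, g (r • x) ∂μ = ENNReal.ofReal r ^ (-(finrank ℝ E : ℝ)) * ∫⁻ x, g x ∂μ := by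
  calc ∫⁻ x, g (r • x) ∂μ = ∫⁻ x, g x ∂(Measure.map (r • ·) μ) :=
        (lintegral_map_equiv g (Homeomorph.smulOfNeZero r hr.ne').toMeasurableEquiv).symm
    _ = _ := by
      rw [Measure.map_addHaar_smul μ hr.ne', lintegral_smul_measure, abs_of_pos (by positivity),
        ENNReal.ofReal_rpow_of_pos hr, Real.rpow_neg hr.le, Real.rpow_natCast, smul_eq_mul]

theorem eLpNorm'_comp_smul_of_pos {ε : Type*} [ENorm ε] {q : ℝ} (hq : 0 < q) (hr : 0 < r)
    (f : E → ε) :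
    eLpNorm' (fun x => f (r • x)) q μ =
      ENNReal.ofReal r ^ (-(finrank ℝ E : ℝ) / q) * eLpNorm' f q μ := by
  rw [eLpNorm'_eq_lintegral_enorm, eLpNorm'_eq_lintegral_enorm,
    lintegral_comp_smul_of_pos μ hr fun x => ‖f x‖ₑ ^ q,
    ENNReal.mul_rpow_of_nonneg _ _ (by positivity), ← ENNReal.rpow_mul, mul_one_div]

theorem eLpNorm_comp_smul_of_pos {ε : Type*} [ENorm ε] {p : ℝ≥0∞} (hp : p ≠ 0) (hp' : p ≠ ⊤)
    (hr : 0 < r) (f : E → ε) :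
    eLpNorm (fun x => f (r • x)) p μ =
      ENNReal.ofReal r ^ (-(finrank ℝ E : ℝ) / p.toReal) * eLpNorm f p μ := by
  rw [eLpNorm_eq_eLpNorm' hp hp', eLpNorm_eq_eLpNorm' hp hp',
    eLpNorm'_comp_smul_of_pos μ (ENNReal.toReal_pos hp hp') hr]

end Dilation

theorem eLpNorm'_const_mul_of_ne_top {α : Type*} [MeasurableSpace α] {μ : Measure α} {q : ℝ}
    (hq : 0 < q) {c : ℝ≥0∞} (hc : c ≠ ⊤) (g : α → ℝ≥0∞) :
    eLpNorm' (fun x => c * g x) q μ = c * eLpNorm' g q μ := by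
  simp only [eLpNorm'_eq_lintegral_enorm, enorm_eq_self, ENNReal.mul_rpow_of_nonneg _ _ hq.le]
  rw [lintegral_const_mul' _ _ (ENNReal.rpow_ne_top_of_nonneg hq.le hc),
    ENNReal.mul_rpow_of_nonneg _ _ (by positivity), ← ENNReal.rpow_mul, mul_one_div_cancel hq.ne',
    ENNReal.rpow_one]

theorem exponent_eq_zero_of_forall_rpow_mul_le {e : ℝ} {a b : ℝ≥0∞} (ha : a ≠ 0) (hb : b ≠ ⊤)
    (h : ∀ l : ℝ, 0 < l → ENNReal.ofReal l ^ e * a ≤ b) : e = 0 := by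
  by_contra he
  obtain ⟨m, hm⟩ := ENNReal.exists_nat_mul_gt ha hb
  have hm0 : (0 : ℝ) < m := Nat.cast_pos.2 (Nat.pos_of_ne_zero (by rintro rfl; simp at hm))
  have hle := h ((m : ℝ) ^ e⁻¹) (by positivity)
  rw [ENNReal.ofReal_rpow_of_pos (by positivity), ← Real.rpow_mul hm0.le, inv_mul_cancel₀ he,
    Real.rpow_one, ENNReal.ofReal_natCast] at hle
  exact (hm.trans_le hle).false

instance (n : ℕ) : (volume : Measure (Pt n)).IsAddHaarMeasure :=
  inferInstanceAs ((volume : Measure (EuclideanSpace ℝ (Fin n))).prod volume).IsAddHaarMeasure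

theorem finrank_Pt (n : ℕ) : finrank ℝ (Pt n) = n + 1 := by
  simp [Module.finrank_prod]

theorem measurableSet_lightCone (n : ℕ) : MeasurableSet (lightCone n) :=
  measurableSet_lt (by fun_prop) (by fun_prop)

theorem smul_mem_lightCone_iff {n : ℕ} {l : ℝ} (hl : 0 < l) {p : Pt n} :
    l • p ∈ lightCone n ↔ p ∈ lightCone n := by
  show ‖(l • p).1‖ < |(l • p).2| ↔ ‖p.1‖ < |p.2|
  rw [Prod.smul_fst, Prod.smul_snd, norm_smul, smul_eq_mul, abs_mul, Real.norm_eq_abs,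
    abs_of_pos hl]
  exact mul_lt_mul_iff_right₀ hl

theorem ker_eq_mul_Om (n : ℕ) (α : ℝ) (f : Pt n → ℝ) (z p : Pt n) :
    ker n α f z p = ENNReal.ofReal (f (z - p)) * Om n α p := rfl

theorem Om_smul {n : ℕ} (α : ℝ) {l : ℝ} (hl : 0 < l) {p : Pt n} (hp : p ∈ lightCone n) :
    Om n α (l • p) = ENNReal.ofReal l ^ (α - n + (α / n - 1)) * Om n α p := by
  have hb : 0 ≤ |p.2| - ‖p.1‖ := sub_nonneg.2 (le_of_lt hp)
  have hsum : |(l • p).2| + ‖(l • p).1‖ = l * (|p.2| + ‖p.1‖) := by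
    simp [norm_smul, abs_mul, abs_of_pos hl, mul_add]
  have hdiff : |(l • p).2| - ‖(l • p).1‖ = l * (|p.2| - ‖p.1‖) := by
    simp [norm_smul, abs_mul, abs_of_pos hl, mul_sub]
  rw [Om, Om, hsum, hdiff, Real.mul_rpow hl.le (by positivity), Real.mul_rpow hl.le hb,
    ENNReal.ofReal_rpow_of_pos hl, ← ENNReal.ofReal_mul (by positivity), Real.rpow_add hl]
  ring_nf

theorem ker_smul_smul {n : ℕ} (α : ℝ) (f : Pt n → ℝ) {l : ℝ} (hl : 0 < l) (z : Pt n) {p : Pt n}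
    (hp : p ∈ lightCone n) :
    ker n α f (l • z) (l • p) =
      ENNReal.ofReal l ^ (α - n + (α / n - 1)) * ker n α (fun w => f (l • w)) z p := by
  rw [ker_eq_mul_Om, ker_eq_mul_Om, Om_smul α hl hp, ← smul_sub, mul_left_comm]

theorem Iop_comp_smul {n : ℕ} (α : ℝ) (f : Pt n → ℝ) {l : ℝ} (hl : 0 < l) (z : Pt n) :
    Iop n α (fun w => f (l • w)) z = ENNReal.ofReal l ^ (-(α + α / n)) * Iop n α f (l • z) := by
  set x := ENNReal.ofReal l with hx
  have hx0 : x ≠ 0 := (ENNReal.ofReal_pos.2 hl).ne'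
  have hxt : x ≠ ⊤ := ENNReal.ofReal_ne_top
  set e : ℝ := α - n + (α / n - 1) with he
  have hG : ∀ p, (lightCone n).indicator (ker n α (fun w => f (l • w)) z) p =
      x ^ (-e) * (lightCone n).indicator (ker n α f (l • z)) (l • p) := by
    intro p
    by_cases hp : p ∈ lightCone n
    · rw [Set.indicator_of_mem hp, Set.indicator_of_mem ((smul_mem_lightCone_iff hl).2 hp),
        ker_smul_smul α f hl z hp, ← hx, ← mul_assoc, ← ENNReal.rpow_add _ _ hx0 hxt,
        neg_add_cancel, ENNReal.rpow_zero, one_mul]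
    · rw [Set.indicator_of_notMem hp,
        Set.indicator_of_notMem (mt (smul_mem_lightCone_iff hl).1 hp), mul_zero]
  calc Iop n α (fun w => f (l • w)) z
      = ∫⁻ p, x ^ (-e) * (lightCone n).indicator (ker n α f (l • z)) (l • p) := by
        rw [Iop, ← lintegral_indicator (measurableSet_lightCone n)]
        exact lintegral_congr hG
    _ = x ^ (-e) * (x ^ (-((n : ℝ) + 1)) * Iop n α f (l • z)) := by
        rw [lintegral_const_mul' _ _ (ENNReal.rpow_ne_top_of_ne_zero hx0 hxt),
          lintegral_comp_smul_of_pos volume hl, finrank_Pt, Iop,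
          lintegral_indicator (measurableSet_lightCone n)]
        push_cast; rfl
    _ = x ^ (-(α + α / n)) * Iop n α f (l • z) := by
        rw [← mul_assoc, ← ENNReal.rpow_add _ _ hx0 hxt, he]
        ring_nf

theorem rpow_mul_eLpNorm'_Iop_le {n : ℕ} {α p q : ℝ} (hp : 0 < p) (hq : 0 < q) {C : ℝ≥0}
    (hC : ∀ f : Pt n → ℝ, Measurable f → (∀ z, 0 ≤ f z) → MemLp f (ENNReal.ofReal p) volume →
      eLpNorm' (Iop n α f) q volume ≤ C * eLpNorm f (ENNReal.ofReal p) volume)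
    {f : Pt n → ℝ} (hf : Measurable f) (hf0 : ∀ z, 0 ≤ f z)
    (hfp : MemLp f (ENNReal.ofReal p) volume) {l : ℝ} (hl : 0 < l) :
    ENNReal.ofReal l ^ ((n + 1) / p - (n + 1) / q - (α + α / n)) * eLpNorm' (Iop n α f) q volume
      ≤ C * eLpNorm f (ENNReal.ofReal p) volume := by
  set x := ENNReal.ofReal l
  have hx0 : x ≠ 0 := (ENNReal.ofReal_pos.2 hl).ne'
  have hxt : x ≠ ⊤ := ENNReal.ofReal_ne_top
  have hp0 : ENNReal.ofReal p ≠ 0 := (ENNReal.ofReal_pos.2 hp).ne'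
  have hfl : eLpNorm (fun w => f (l • w)) (ENNReal.ofReal p) volume =
      x ^ (-((n : ℝ) + 1) / p) * eLpNorm f (ENNReal.ofReal p) volume := by
    rw [eLpNorm_comp_smul_of_pos volume hp0 ENNReal.ofReal_ne_top hl, finrank_Pt,
      ENNReal.toReal_ofReal hp.le]
    push_cast; rfl
  have hIfl : eLpNorm' (Iop n α fun w => f (l • w)) q volume =
      x ^ (-(α + α / n)) * (x ^ (-((n : ℝ) + 1) / q) * eLpNorm' (Iop n α f) q volume) := by
    rw [show Iop n α (fun w => f (l • w)) = fun z => x ^ (-(α + α / n)) * Iop n α f (l • z) from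
        funext (Iop_comp_smul α f hl),
      eLpNorm'_const_mul_of_ne_top hq (ENNReal.rpow_ne_top_of_ne_zero hx0 hxt),
      eLpNorm'_comp_smul_of_pos volume hq hl, finrank_Pt]
    push_cast; rfl
  have hbound := hC (fun w => f (l • w)) (hf.comp (measurable_const_smul l)) (fun z => hf0 _)
    ⟨(hf.comp (measurable_const_smul l)).aestronglyMeasurable, by
      rw [hfl]; exact ENNReal.mul_lt_top (ENNReal.rpow_ne_top_of_ne_zero hx0 hxt).lt_top hfp.2⟩
  rw [hIfl, hfl] at hbound
  calc x ^ ((n + 1) / p - (n + 1) / q - (α + α / n)) * eLpNorm' (Iop n α f) q volume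
      = x ^ (((n : ℝ) + 1) / p) * (x ^ (-(α + α / n)) *
          (x ^ (-((n : ℝ) + 1) / q) * eLpNorm' (Iop n α f) q volume)) := by
        rw [← mul_assoc, ← mul_assoc, ← ENNReal.rpow_add _ _ hx0 hxt,
          ← ENNReal.rpow_add _ _ hx0 hxt]
        ring_nf
    _ ≤ x ^ (((n : ℝ) + 1) / p) * (C * (x ^ (-((n : ℝ) + 1) / p) *
          eLpNorm f (ENNReal.ofReal p) volume)) := by gcongr
    _ = C * eLpNorm f (ENNReal.ofReal p) volume := by
        rw [mul_left_comm, ← mul_assoc (x ^ _), ← ENNReal.rpow_add _ _ hx0 hxt, neg_div,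
          add_neg_cancel, ENNReal.rpow_zero, one_mul]

theorem one_le_Om {n : ℕ} {α : ℝ} (hα : α ≤ n) {p : Pt n} (hp : p ∈ lightCone n)
    (hp1 : |p.2| + ‖p.1‖ ≤ 1) : 1 ≤ Om n α p := by
  have hsum : 0 < |p.2| + ‖p.1‖ := by linarith [norm_nonneg p.1, show ‖p.1‖ < |p.2| from hp]
  have hdiff : 0 < |p.2| - ‖p.1‖ := sub_pos.2 hp
  rw [Om, ENNReal.one_le_ofReal]
  exact one_le_mul_of_one_le_of_one_le
    (Real.one_le_rpow_of_pos_of_le_one_of_nonpos hsum hp1 (by linarith))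
    (Real.one_le_rpow_of_pos_of_le_one_of_nonpos hdiff (by linarith [norm_nonneg p.1])
      (by linarith [div_le_one_of_le₀ hα (Nat.cast_nonneg n)]))

theorem mem_lightCone_of_mem_ball {n : ℕ} {w : Pt n} (hw : w ∈ ball ((0, 5 / 8) : Pt n) (1 / 8)) :
    w ∈ lightCone n ∧ |w.2| + ‖w.1‖ ≤ 1 := by
  rw [mem_ball, Prod.dist_eq, max_lt_iff, dist_zero_right, Real.dist_eq, abs_lt] at hw
  obtain ⟨h1, h2, h3⟩ := hw
  have hw2 : |w.2| = w.2 := abs_of_pos (by linarith)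
  refine ⟨show ‖w.1‖ < |w.2| by rw [hw2]; linarith, by rw [hw2]; linarith⟩

theorem measure_ball_le_Iop_indicator_ball {n : ℕ} {α : ℝ} (hα : α ≤ n) {z : Pt n}
    (hz : z ∈ ball 0 (1 / 8)) :
    volume (ball ((0, 5 / 8) : Pt n) (1 / 8)) ≤ Iop n α ((ball (0 : Pt n) 1).indicator 1) z := by
  have hc : ‖((0, 5 / 8) : Pt n)‖ = 5 / 8 := by norm_num [Prod.norm_def]
  calc volume (ball ((0, 5 / 8) : Pt n) (1 / 8))
      = ∫⁻ _ in ball ((0, 5 / 8) : Pt n) (1 / 8), 1 := (setLIntegral_one _).symm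
    _ ≤ ∫⁻ w in ball ((0, 5 / 8) : Pt n) (1 / 8),
          ker n α ((ball (0 : Pt n) 1).indicator 1) z w := by
        refine setLIntegral_mono' measurableSet_ball fun w hw => ?_
        obtain ⟨hcone, hw1⟩ := mem_lightCone_of_mem_ball hw
        have hzw : z - w ∈ ball (0 : Pt n) 1 := by
          rw [mem_ball_iff_norm] at hw
          rw [mem_ball_zero_iff] at hz ⊢
          linarith [norm_sub_le z w, norm_sub_norm_le w ((0, 5 / 8) : Pt n)]
        rw [ker_eq_mul_Om, Set.indicator_of_mem hzw, Pi.one_apply, ENNReal.ofReal_one, one_mul]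
        exact one_le_Om hα hcone hw1
    _ ≤ Iop n α ((ball (0 : Pt n) 1).indicator 1) z :=
        lintegral_mono_set fun _ hw => (mem_lightCone_of_mem_ball hw).1

theorem eLpNorm'_Iop_indicator_ball_ne_zero {n : ℕ} {α q : ℝ} (hα : α ≤ n) (hq : 0 < q) :
    eLpNorm' (Iop n α ((ball (0 : Pt n) 1).indicator 1)) q volume ≠ 0 := by
  set c := volume (ball ((0, 5 / 8) : Pt n) (1 / 8))
  have hc : c ≠ 0 := (measure_ball_pos volume _ (by norm_num)).ne'
  have hlower : c ^ q * volume (ball (0 : Pt n) (1 / 8)) ≤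
      ∫⁻ z, Iop n α ((ball (0 : Pt n) 1).indicator 1) z ^ q := by
    rw [← lintegral_indicator_const measurableSet_ball]
    refine lintegral_mono fun z => ?_
    by_cases hz : z ∈ ball (0 : Pt n) (1 / 8)
    · rw [Set.indicator_of_mem hz]
      exact ENNReal.rpow_le_rpow (measure_ball_le_Iop_indicator_ball hα hz) hq.le
    · rw [Set.indicator_of_notMem hz]
      exact bot_le
  have hpos : 0 < c ^ q * volume (ball (0 : Pt n) (1 / 8)) :=
    ENNReal.mul_pos (ENNReal.rpow_pos_of_nonneg (pos_iff_ne_zero.2 hc) hq.le).ne'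
      (measure_ball_pos volume _ (by norm_num)).ne'
  rw [eLpNorm'_eq_lintegral_enorm]
  simp only [enorm_eq_self]
  exact (ENNReal.rpow_pos_of_nonneg (hpos.trans_le hlower) (by positivity)).ne'

theorem stmt1_general (n : ℕ) (hn : 1 ≤ n) (α : ℝ) (hαn : α < n)
    (p q : ℝ) (hp : 1 < p) (hpq : p < q)
    (H : ∃ C : ℝ≥0, ∀ f : Pt n → ℝ, Measurable f → (∀ z, 0 ≤ f z) →
      MemLp f (ENNReal.ofReal p) volume →
      (∫⁻ z, Iop n α f z ^ q) ^ (1 / q) ≤ C * eLpNorm f (ENNReal.ofReal p) volume) :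
    α / n = 1 / p - 1 / q := by
  obtain ⟨C, hC⟩ := H
  have hp0 : 0 < p := by linarith
  have hq0 : 0 < q := by linarith
  have hC' : ∀ f : Pt n → ℝ, Measurable f → (∀ z, 0 ≤ f z) → MemLp f (ENNReal.ofReal p) volume →
      eLpNorm' (Iop n α f) q volume ≤ C * eLpNorm f (ENNReal.ofReal p) volume := by
    simpa only [eLpNorm'_eq_lintegral_enorm, enorm_eq_self] using hC
  set f := (ball (0 : Pt n) 1).indicator (1 : Pt n → ℝ)
  have hf : Measurable f := measurable_one.indicator measurableSet_ball
  have hf0 : ∀ z, 0 ≤ f z := Set.indicator_nonneg fun _ _ => zero_le_one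
  have hfp : MemLp f (ENNReal.ofReal p) volume :=
    memLp_indicator_const _ measurableSet_ball 1 (Or.inr measure_ball_lt_top.ne)
  have hE := exponent_eq_zero_of_forall_rpow_mul_le
    (eLpNorm'_Iop_indicator_ball_ne_zero hαn.le hq0)
    (ENNReal.mul_ne_top ENNReal.coe_ne_top hfp.eLpNorm_ne_top)
    fun l hl => rpow_mul_eLpNorm'_Iop_le hp0 hq0 hC' hf hf0 hfp hl
  have hn0 : (n : ℝ) ≠ 0 := Nat.cast_ne_zero.2 (by omega)
  have hfactor : ((n : ℝ) + 1) * (1 / p - 1 / q - α / n) = 0 := by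
    rw [← hE]; field_simp
  rcases mul_eq_zero.1 hfactor with h | h
  · linarith [(n.cast_nonneg : (0 : ℝ) ≤ n)]
  · linarith

theorem stmt1 (n : ℕ) (hn : 1 ≤ n) (α : ℝ) (hα0 : 0 < α) (hαn : α < n)
    (p q : ℝ) (hp : 1 < p) (hpq : p < q)
    (H : ∃ C : ℝ≥0, ∀ f : Pt n → ℝ, Measurable f → (∀ z, 0 ≤ f z) →
      MemLp f (ENNReal.ofReal p) volume →
      (∫⁻ z, Iop n α f z ^ q) ^ (1 / q) ≤ C * eLpNorm f (ENNReal.ofReal p) volume) :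
    α / n = 1 / p - 1 / q :=
  stmt1_general n hn α hαn p q hp hpq H

end
end

section
/- Let n ≥ 2 and q ≥ 2 be integers, let ℓ ≥ h ≥ 0 be integers, let j, k_1, …, k_{q−1} ∈ ℤ and set k = min{k_1, …, k_{q−1}}. Assume j − h < k − 2 < j − 2 and set r = j − k + ℓ − h (so that 0 ≤ r < ℓ − 2). Then there is a constant C = C(n, q) such that for all points (x,t), (x^1,t^1), …, (x^{q−1},t^{q−1}) ∈ ℝ^n × ℝ, the (n+1)-dimensional Lebesgue measures satisfy |Λ_{ℓj}(x,t) ∩ ⋂_{i=1}^{q−1} Λ_{ℓ−h, k_i}(x^i,t^i)| ≤ C 2^{j−k−h} |Λ*_{rj}(x,t) ∩ ⋂_{i=1}^{q−1} Λ*_{ℓ−h, k_i}(x^i,t^i)|. -/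
open MeasureTheory ENNReal NNReal

noncomputable section

private lemma two_zpow_pos' (a : ℤ) : (0:ℝ) < 2 ^ a := zpow_pos (by norm_num) a

private lemma two_zpow_le' {a b : ℤ} (hab : a ≤ b) : (2:ℝ) ^ a ≤ 2 ^ b :=
  zpow_le_zpow_right₀ (by norm_num) hab

private lemma two_zpow_add' (a b : ℤ) : (2:ℝ) ^ (a + b) = 2 ^ a * 2 ^ b :=
  zpow_add₀ (by norm_num) a b

private lemma two_zpow_lt' {a b : ℤ} (hab : a < b) : (2:ℝ) ^ a < 2 ^ b :=
  zpow_lt_zpow_right₀ (by norm_num) hab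

private lemma zsum_lt' (a b : ℤ) (hba : b ≤ a - 2) :
    (2:ℝ) ^ (a + 1) + 2 ^ b < 2 ^ (a + 3) := by
  have h1 : (2:ℝ) ^ b ≤ 2 ^ (a - 2) := two_zpow_le' hba
  have h2 : (2:ℝ) ^ (a + 1) = 2 ^ (a - 3) * 16 := by
    rw [show a + 1 = a - 3 + 4 by ring, two_zpow_add']; norm_num
  have h3 : (2:ℝ) ^ (a + 3) = 2 ^ (a - 3) * 64 := by
    rw [show a + 3 = a - 3 + 6 by ring, two_zpow_add']; norm_num
  have h4 : (2:ℝ) ^ (a - 2) = 2 ^ (a - 3) * 2 := by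
    rw [show a - 2 = a - 3 + 1 by ring, two_zpow_add']; norm_num
  nlinarith [two_zpow_pos' (a - 3)]

private lemma zsub_ge' (a b : ℤ) (hba : b ≤ a - 2) :
    (2:ℝ) ^ (a - 3) ≤ 2 ^ a - 2 ^ b := by
  have h1 : (2:ℝ) ^ b ≤ 2 ^ (a - 2) := two_zpow_le' hba
  have h2 : (2:ℝ) ^ a = 2 ^ (a - 3) * 8 := by
    rw [show a = a - 3 + 3 by ring, two_zpow_add']; norm_num
  have h4 : (2:ℝ) ^ (a - 2) = 2 ^ (a - 3) * 2 := by
    rw [show a - 2 = a - 3 + 1 by ring, two_zpow_add']; norm_num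
  nlinarith [two_zpow_pos' (a - 3)]

private lemma meas_quad {n : ℕ} {f g : Pt n → ℝ} (hf : Measurable f) (hg : Measurable g)
    (a b a' b' : ℝ) :
    MeasurableSet {p : Pt n | a ≤ f p ∧ f p < b ∧ a' ≤ g p ∧ g p < b'} := by
  have he : {p : Pt n | a ≤ f p ∧ f p < b ∧ a' ≤ g p ∧ g p < b'}
      = {p | a ≤ f p} ∩ ({p | f p < b} ∩ ({p | a' ≤ g p} ∩ {p | g p < b'})) := by
    ext p; simp [Set.mem_setOf_eq, and_assoc]
  rw [he]
  exact (measurableSet_le measurable_const hf).inter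
    ((measurableSet_lt hf measurable_const).inter
      ((measurableSet_le measurable_const hg).inter (measurableSet_lt hg measurable_const)))

private lemma closed_quad {n : ℕ} {f g : Pt n → ℝ} (hf : Continuous f) (hg : Continuous g)
    (a b a' b' : ℝ) :
    IsClosed {p : Pt n | a ≤ f p ∧ f p ≤ b ∧ a' ≤ g p ∧ g p ≤ b'} := by
  have he : {p : Pt n | a ≤ f p ∧ f p ≤ b ∧ a' ≤ g p ∧ g p ≤ b'}
      = {p | a ≤ f p} ∩ ({p | f p ≤ b} ∩ ({p | a' ≤ g p} ∩ {p | g p ≤ b'})) := by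
    ext p; simp [Set.mem_setOf_eq, and_assoc]
  rw [he]
  exact (isClosed_le continuous_const hf).inter
    ((isClosed_le hf continuous_const).inter
      ((isClosed_le continuous_const hg).inter (isClosed_le hg continuous_const)))

private lemma cont_S {n : ℕ} (c : Pt n) :
    Continuous fun p : Pt n => |p.2 - c.2| + ‖p.1 - c.1‖ :=
  ((continuous_snd.sub continuous_const).abs).add ((continuous_fst.sub continuous_const).norm)

private lemma cont_D {n : ℕ} (c : Pt n) :
    Continuous fun p : Pt n => |p.2 - c.2| - ‖p.1 - c.1‖ :=
  ((continuous_snd.sub continuous_const).abs).sub ((continuous_fst.sub continuous_const).norm)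

private lemma meas_shellAt (n : ℕ) (ℓ j : ℤ) (c : Pt n) : MeasurableSet (shellAt n ℓ j c) :=
  meas_quad (cont_S c).measurable (cont_D c).measurable _ _ _ _

private lemma sign_bound (n : ℕ) (ℓ h j k : ℤ) (q1 : ℕ) (κ : Fin q1 → ℤ)
    (hhl : h ≤ ℓ) (hκ : ∀ i, k ≤ κ i)
    (hjk : j ≤ k + h - 3) (hkj : k ≤ j - 1)
    (c : Pt n) (ci : Fin q1 → Pt n) (ε : ℝ) (hε : ε = 1 ∨ ε = -1) :
    ∃ E : Set (Pt n), MeasurableSet E ∧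
      (E ⊆ shellStarAt n (j - k + ℓ - h) j c ∩ ⋂ i, shellStarAt n (ℓ - h) (κ i) (ci i)) ∧
      (∀ p ∈ E, 0 < ε * (p.2 - c.2)) ∧
      volume ((shellAt n ℓ j c ∩ ⋂ i, shellAt n (ℓ - h) (κ i) (ci i)) ∩
          {p : Pt n | 0 < ε * (p.2 - c.2)}) ≤
        ENNReal.ofReal ((2:ℝ) ^ (j - k - h + 3)) * volume E := by
  have hεsq : ε * ε = 1 := by rcases hε with h'|h' <;> rw [h'] <;> norm_num
  have hεabs : ∀ x : ℝ, |ε * x| = |x| := by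
    rcases hε with h'|h' <;> intro x <;> rw [h'] <;> simp
  set δ1 : ℝ := 2 ^ (k + h - ℓ - 3) with hδ1
  set δ2 : ℝ := 2 ^ (k + h - ℓ - 2) with hδ2
  have hδ1pos : 0 < δ1 := two_zpow_pos' _
  have hδ2pos : 0 < δ2 := two_zpow_pos' _
  have hδ12 : δ1 ≤ δ2 := two_zpow_le' (by omega)
  set L : Set (Pt n) := (shellAt n ℓ j c ∩ ⋂ i, shellAt n (ℓ - h) (κ i) (ci i)) ∩
      {p : Pt n | 0 < ε * (p.2 - c.2)} with hL
  have hLmeas : MeasurableSet L := by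
    refine ((meas_shellAt n ℓ j c).inter (MeasurableSet.iInter fun i => meas_shellAt _ _ _ _)).inter ?_
    exact measurableSet_lt measurable_const ((measurable_snd.sub measurable_const).const_mul ε)
  set Lc : Set (Pt n) :=
    ({p : Pt n | (2:ℝ) ^ j ≤ |p.2 - c.2| + ‖p.1 - c.1‖ ∧
        |p.2 - c.2| + ‖p.1 - c.1‖ ≤ 2 ^ (j + 1) ∧
        (2:ℝ) ^ (j - ℓ) ≤ ε * (p.2 - c.2) - ‖p.1 - c.1‖ ∧
        ε * (p.2 - c.2) - ‖p.1 - c.1‖ ≤ 2 ^ (j - ℓ + 1)}) ∩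
      ⋂ i, {p : Pt n | (2:ℝ) ^ (κ i) ≤ |p.2 - (ci i).2| + ‖p.1 - (ci i).1‖ ∧
        |p.2 - (ci i).2| + ‖p.1 - (ci i).1‖ ≤ 2 ^ (κ i + 1) ∧
        (2:ℝ) ^ (κ i - (ℓ - h)) ≤ |p.2 - (ci i).2| - ‖p.1 - (ci i).1‖ ∧
        |p.2 - (ci i).2| - ‖p.1 - (ci i).1‖ ≤ 2 ^ (κ i - (ℓ - h) + 1)} with hLcdef
  have hLcclosed : IsClosed Lc := by
    refine IsClosed.inter (closed_quad (cont_S c) ?_ _ _ _ _)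
      (isClosed_iInter fun i => closed_quad (cont_S (ci i)) (cont_D (ci i)) _ _ _ _)
    exact (continuous_const.mul (continuous_snd.sub continuous_const)).sub
      ((continuous_fst.sub continuous_const).norm)
  have hLsub : L ⊆ Lc := by
    rintro p ⟨⟨h1, h2⟩, h3⟩
    obtain ⟨ha1, ha2, ha3, ha4⟩ := h1
    have h3' : 0 < ε * (p.2 - c.2) := h3
    have habs : |p.2 - c.2| = ε * (p.2 - c.2) := by
      rcases hε with h'|h' <;> rw [h'] at h3' ⊢
      · rw [one_mul] at h3' ⊢; exact abs_of_pos h3'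
      · rw [neg_one_mul] at h3' ⊢; rw [abs_of_neg (by linarith)]
    refine ⟨⟨ha1, ha2.le, by rw [← habs]; exact ha3, by rw [← habs]; exact ha4.le⟩, ?_⟩
    refine Set.mem_iInter.2 fun i => ?_
    obtain ⟨hb1, hb2, hb3, hb4⟩ := Set.mem_iInter.1 h2 i
    exact ⟨hb1, hb2.le, hb3, hb4.le⟩
  have hclosure : closure L ⊆ Lc := hLcclosed.closure_subset_iff.mpr hLsub
  have hLbdd : Bornology.IsBounded L := by
    refine Bornology.IsBounded.subset (Metric.isBounded_closedBall (x := c) (r := 2 ^ (j + 1))) ?_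
    rintro p ⟨⟨h1, _⟩, _⟩
    obtain ⟨_, ha2, _, _⟩ := h1
    have hd1 : dist p.1 c.1 = ‖p.1 - c.1‖ := dist_eq_norm _ _
    have hd2 : dist p.2 c.2 = |p.2 - c.2| := Real.dist_eq _ _
    have h01 : 0 ≤ ‖p.1 - c.1‖ := norm_nonneg _
    have h02 : 0 ≤ |p.2 - c.2| := abs_nonneg _
    rw [Metric.mem_closedBall, Prod.dist_eq]
    exact max_le (by rw [hd1]; linarith) (by rw [hd2]; linarith)
  have hKcomp : IsCompact (closure L) :=
    Metric.isCompact_of_isClosed_isBounded isClosed_closure hLbdd.closure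
  set E : Set (Pt n) :=
    (fun w : Pt n × ℝ => ((w.1.1 : EuclideanSpace ℝ (Fin n)), w.1.2 + ε * w.2)) ''
      ((closure L) ×ˢ Set.Icc δ1 δ2) with hE
  have hEcomp : IsCompact E := by
    refine (hKcomp.prod isCompact_Icc).image ?_
    exact (continuous_fst.fst).prodMk ((continuous_fst.snd).add (continuous_const.mul continuous_snd))
  have hEmeas : MeasurableSet E := hEcomp.measurableSet
  have hEprop : ∀ p ∈ E, (p ∈ shellStarAt n (j - k + ℓ - h) j c ∧
      ∀ i, p ∈ shellStarAt n (ℓ - h) (κ i) (ci i)) ∧ 0 < ε * (p.2 - c.2) := by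
    rintro p ⟨⟨w, d⟩, ⟨hwK, hdm1, hdm2⟩, rfl⟩
    obtain ⟨hw1, hw2⟩ := hclosure hwK
    obtain ⟨ha1, ha2, ha3, ha4⟩ := hw1
    set A : ℝ := ‖w.1 - c.1‖ with hA
    set B : ℝ := ε * (w.2 - c.2) with hB
    have hApos : 0 ≤ A := norm_nonneg _
    have hBpos : 0 < B := lt_of_lt_of_le (two_zpow_pos' (j - ℓ)) (by linarith)
    have habsB : |w.2 - c.2| = B := by
      rw [← hεabs (w.2 - c.2), ← hB]; exact abs_of_pos hBpos
    rw [habsB] at ha1 ha2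
    have hsnd : ε * ((w.2 + ε * d) - c.2) = B + d := by
      have expand : ε * ((w.2 + ε * d) - c.2) = ε * (w.2 - c.2) + (ε * ε) * d := by ring
      rw [expand, hεsq, one_mul, ← hB]
    have hpos' : 0 < B + d := by linarith
    have habs' : |(w.2 + ε * d) - c.2| = B + d := by
      rw [← hεabs ((w.2 + ε * d) - c.2), hsnd]; exact abs_of_pos hpos'
    refine ⟨⟨?_, ?_⟩, ?_⟩
    · -- star shell at c
      show (2:ℝ) ^ (j - 3) ≤ |(w.2 + ε * d) - c.2| + ‖w.1 - c.1‖ ∧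
        |(w.2 + ε * d) - c.2| + ‖w.1 - c.1‖ < 2 ^ (j + 3) ∧
        (2:ℝ) ^ (j - (j - k + ℓ - h) - 3) ≤ |(w.2 + ε * d) - c.2| - ‖w.1 - c.1‖ ∧
        |(w.2 + ε * d) - c.2| - ‖w.1 - c.1‖ < 2 ^ (j - (j - k + ℓ - h) + 3)
      rw [habs', ← hA]
      have e1 : (2:ℝ) ^ (j - 3) ≤ 2 ^ j := two_zpow_le' (by omega)
      have e2 : δ2 ≤ (2:ℝ) ^ (j - 2) := two_zpow_le' (by omega)
      have e3 := zsum_lt' j (j - 2) (by omega)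
      refine ⟨by linarith, by linarith, ?_, ?_⟩
      · rw [show j - (j - k + ℓ - h) - 3 = k + h - ℓ - 3 by ring, ← hδ1]
        have := two_zpow_pos' (j - ℓ)
        linarith
      · rw [show j - (j - k + ℓ - h) + 3 = k + h - ℓ + 3 by ring]
        have e4 : (2:ℝ) ^ (j - ℓ + 1) ≤ δ2 := two_zpow_le' (by omega)
        have e5 : δ2 + δ2 = (2:ℝ) ^ (k + h - ℓ - 1) := by
          rw [hδ2, show k + h - ℓ - 1 = k + h - ℓ - 2 + 1 by ring, two_zpow_add']; ring
        have e6 : (2:ℝ) ^ (k + h - ℓ - 1) < 2 ^ (k + h - ℓ + 3) := two_zpow_lt' (by omega)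
        linarith
    · -- star shells at ci i
      intro i
      obtain ⟨hb1, hb2, hb3, hb4⟩ := Set.mem_iInter.1 hw2 i
      have hdd : |((w.2 + ε * d) - (ci i).2) - (w.2 - (ci i).2)| = d := by
        rw [show ((w.2 + ε * d) - (ci i).2) - (w.2 - (ci i).2) = ε * d by ring, hεabs,
          abs_of_pos (by linarith)]
      have ht1 : |(w.2 + ε * d) - (ci i).2| - |w.2 - (ci i).2| ≤ d := by
        have := abs_sub_abs_le_abs_sub ((w.2 + ε * d) - (ci i).2) (w.2 - (ci i).2)
        rw [hdd] at this; exact this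
      have ht2 : |w.2 - (ci i).2| - |(w.2 + ε * d) - (ci i).2| ≤ d := by
        have := abs_sub_abs_le_abs_sub (w.2 - (ci i).2) ((w.2 + ε * d) - (ci i).2)
        rw [show w.2 - (ci i).2 - (w.2 + ε * d - (ci i).2) = -(ε * d) by ring, abs_neg, hεabs,
          abs_of_pos (show (0:ℝ) < d by linarith)] at this
        exact this
    /- goal: star shell at ci i -/
      show (2:ℝ) ^ (κ i - 3) ≤ |(w.2 + ε * d) - (ci i).2| + ‖w.1 - (ci i).1‖ ∧
        |(w.2 + ε * d) - (ci i).2| + ‖w.1 - (ci i).1‖ < 2 ^ (κ i + 3) ∧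
        (2:ℝ) ^ (κ i - (ℓ - h) - 3) ≤ |(w.2 + ε * d) - (ci i).2| - ‖w.1 - (ci i).1‖ ∧
        |(w.2 + ε * d) - (ci i).2| - ‖w.1 - (ci i).1‖ < 2 ^ (κ i - (ℓ - h) + 3)
      have hδκ2 : δ2 ≤ (2:ℝ) ^ (κ i - 2) := two_zpow_le' (by have := hκ i; omega)
      have hδκ2' : δ2 ≤ (2:ℝ) ^ (κ i - (ℓ - h) - 2) := two_zpow_le' (by have := hκ i; omega)
      have hz1 := zsub_ge' (κ i) (κ i - 2) (by omega)
      have hz2 := zsum_lt' (κ i) (κ i - 2) (by omega)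
      have hz3 := zsub_ge' (κ i - (ℓ - h)) (κ i - (ℓ - h) - 2) (by omega)
      have hz4 := zsum_lt' (κ i - (ℓ - h)) (κ i - (ℓ - h) - 2) (by omega)
      refine ⟨by linarith, by linarith, by linarith, by linarith⟩
    · show 0 < ε * ((w.2 + ε * d) - c.2)
      rw [hsnd]; exact hpos'
  refine ⟨E, hEmeas, fun p hp => ⟨(hEprop p hp).1.1, Set.mem_iInter.2 (hEprop p hp).1.2⟩,
    fun p hp => (hEprop p hp).2, ?_⟩
  have hfoldL : volume L = ∫⁻ y, volume (Prod.mk y ⁻¹' L) := by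
    rw [Measure.volume_eq_prod, Measure.prod_apply hLmeas]
  have hfoldE : volume E = ∫⁻ y, volume (Prod.mk y ⁻¹' E) := by
    rw [Measure.volume_eq_prod, Measure.prod_apply hEmeas]
  rw [hfoldL, hfoldE, ← lintegral_const_mul' _ _ (show ENNReal.ofReal ((2:ℝ) ^ (j - k - h + 3)) ≠ ⊤ from ENNReal.ofReal_ne_top)]
  refine lintegral_mono fun y => ?_
  by_cases hy : ∃ s : ℝ, (y, s) ∈ L
  · obtain ⟨a, ha⟩ := hy
    have hfibL : volume (Prod.mk y ⁻¹' L) ≤ ENNReal.ofReal ((2:ℝ) ^ (j - ℓ)) := by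
      have hIL : (2:ℝ) ^ (j - ℓ + 1) = 2 ^ (j - ℓ) * 2 := by rw [two_zpow_add']; norm_num
      rcases hε with h'|h'
      · refine le_trans (measure_mono (show Prod.mk y ⁻¹' L ⊆
            Set.Ico (c.2 + ‖y - c.1‖ + 2 ^ (j - ℓ)) (c.2 + ‖y - c.1‖ + 2 ^ (j - ℓ + 1)) from ?_))
            (le_of_eq ?_)
        · rintro s ⟨⟨hs1, _⟩, hs3⟩
          have hh3 : (2:ℝ) ^ (j - ℓ) ≤ |s - c.2| - ‖y - c.1‖ := hs1.2.2.1
          have hh4 : |s - c.2| - ‖y - c.1‖ < (2:ℝ) ^ (j - ℓ + 1) := hs1.2.2.2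
          have hsp : (0:ℝ) < ε * (s - c.2) := hs3
          rw [h', one_mul] at hsp
          rw [abs_of_pos hsp] at hh3 hh4
          exact ⟨by linarith, by linarith⟩
        · rw [Real.volume_Ico]
          congr 1
          rw [hIL]; ring
      · refine le_trans (measure_mono (show Prod.mk y ⁻¹' L ⊆
            Set.Ioc (c.2 - ‖y - c.1‖ - 2 ^ (j - ℓ + 1)) (c.2 - ‖y - c.1‖ - 2 ^ (j - ℓ)) from ?_))
            (le_of_eq ?_)
        · rintro s ⟨⟨hs1, _⟩, hs3⟩
          have hh3 : (2:ℝ) ^ (j - ℓ) ≤ |s - c.2| - ‖y - c.1‖ := hs1.2.2.1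
          have hh4 : |s - c.2| - ‖y - c.1‖ < (2:ℝ) ^ (j - ℓ + 1) := hs1.2.2.2
          have hsp : (0:ℝ) < ε * (s - c.2) := hs3
          rw [h', neg_one_mul] at hsp
          rw [abs_of_neg (by linarith)] at hh3 hh4
          exact ⟨by linarith, by linarith⟩
        · rw [Real.volume_Ioc]
          congr 1
          rw [hIL]; ring
    have hdd : δ2 - δ1 = δ1 := by
      rw [hδ1, hδ2, show k + h - ℓ - 2 = k + h - ℓ - 3 + 1 by ring, two_zpow_add']; ring
    have hfibE : ENNReal.ofReal δ1 ≤ volume (Prod.mk y ⁻¹' E) := by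
      rcases hε with h'|h'
      · have hsub : Set.Icc (a + δ1) (a + δ2) ⊆ Prod.mk y ⁻¹' E := by
          intro u hu
          refine ⟨((y, a), u - a), ⟨subset_closure ha, ?_, ?_⟩, ?_⟩
          · show δ1 ≤ u - a
            linarith [hu.1]
          · show u - a ≤ δ2
            linarith [hu.2]
          · show ((y : EuclideanSpace ℝ (Fin n)), a + ε * (u - a)) = (y, u)
            rw [h', show a + (1:ℝ) * (u - a) = u from by ring]
        refine le_trans (le_of_eq ?_) (measure_mono hsub)
        rw [Real.volume_Icc]
        congr 1
        linarith
      · have hsub : Set.Icc (a - δ2) (a - δ1) ⊆ Prod.mk y ⁻¹' E := by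
          intro u hu
          refine ⟨((y, a), a - u), ⟨subset_closure ha, ?_, ?_⟩, ?_⟩
          · show δ1 ≤ a - u
            linarith [hu.2]
          · show a - u ≤ δ2
            linarith [hu.1]
          · show ((y : EuclideanSpace ℝ (Fin n)), a + ε * (a - u)) = (y, u)
            rw [h', show a + (-1:ℝ) * (a - u) = u from by ring]
        refine le_trans (le_of_eq ?_) (measure_mono hsub)
        rw [Real.volume_Icc]
        congr 1
        linarith
    calc volume (Prod.mk y ⁻¹' L) ≤ ENNReal.ofReal ((2:ℝ) ^ (j - ℓ)) := hfibL
      _ = ENNReal.ofReal ((2:ℝ) ^ (j - k - h + 3)) * ENNReal.ofReal δ1 := by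
          rw [← ENNReal.ofReal_mul (two_zpow_pos' _).le, hδ1, ← two_zpow_add',
            show j - k - h + 3 + (k + h - ℓ - 3) = j - ℓ by ring]
      _ ≤ ENNReal.ofReal ((2:ℝ) ^ (j - k - h + 3)) * volume (Prod.mk y ⁻¹' E) :=
          mul_le_mul_right hfibE _
  · have hempty : Prod.mk y ⁻¹' L = ∅ := by
      ext s
      simp only [Set.mem_preimage, Set.mem_empty_iff_false, iff_false]
      exact fun hs => hy ⟨s, hs⟩
    rw [hempty]
    simp

theorem stmt4 (n : ℕ) (hn : 2 ≤ n) (q : ℕ) (hq : 2 ≤ q) :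
    ∃ C : ℝ≥0, 0 < C ∧ ∀ (ℓ h : ℤ), 0 ≤ h → h ≤ ℓ →
      ∀ (j k : ℤ) (κ : Fin (q - 1) → ℤ), (∀ i, k ≤ κ i) → (∃ i, κ i = k) →
      j - h < k - 2 → k - 2 < j - 2 →
      ∀ (c : Pt n) (ci : Fin (q - 1) → Pt n),
        volume (shellAt n ℓ j c ∩ ⋂ i, shellAt n (ℓ - h) (κ i) (ci i)) ≤
          C * ENNReal.ofReal ((2:ℝ) ^ (j - k - h)) *
            volume (shellStarAt n (j - k + ℓ - h) j c ∩
              ⋂ i, shellStarAt n (ℓ - h) (κ i) (ci i)) := by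
  refine ⟨8, by norm_num, ?_⟩
  intro ℓ h _hh hhl j k κ hκ _hex hjk hkj c ci
  have hjk' : j ≤ k + h - 3 := by omega
  have hkj' : k ≤ j - 1 := by omega
  obtain ⟨E1, hE1m, hE1sub, hE1sgn, hE1vol⟩ :=
    sign_bound n ℓ h j k (q - 1) κ hhl hκ hjk' hkj' c ci 1 (Or.inl rfl)
  obtain ⟨E2, hE2m, hE2sub, hE2sgn, hE2vol⟩ :=
    sign_bound n ℓ h j k (q - 1) κ hhl hκ hjk' hkj' c ci (-1) (Or.inr rfl)
  set L : Set (Pt n) := shellAt n ℓ j c ∩ ⋂ i, shellAt n (ℓ - h) (κ i) (ci i) with hLdef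
  set R : Set (Pt n) := shellStarAt n (j - k + ℓ - h) j c ∩
      ⋂ i, shellStarAt n (ℓ - h) (κ i) (ci i) with hRdef
  have hsplit : L ⊆ (L ∩ {p : Pt n | 0 < (1:ℝ) * (p.2 - c.2)}) ∪
      (L ∩ {p : Pt n | 0 < (-1:ℝ) * (p.2 - c.2)}) := by
    intro p hp
    have h3 : (2:ℝ) ^ (j - ℓ) ≤ |p.2 - c.2| - ‖p.1 - c.1‖ := hp.1.2.2.1
    have hne : p.2 - c.2 ≠ 0 := by
      intro h0
      rw [h0, abs_zero] at h3
      have := norm_nonneg (p.1 - c.1)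
      have := two_zpow_pos' (j - ℓ)
      linarith
    rcases hne.lt_or_gt with hlt | hlt
    · right
      exact ⟨hp, by simp only [Set.mem_setOf_eq]; linarith⟩
    · left
      exact ⟨hp, by simp only [Set.mem_setOf_eq]; linarith⟩
  have hdisj : Disjoint E1 E2 := by
    rw [Set.disjoint_left]
    intro p h1 h2
    have g1 := hE1sgn p h1
    have g2 := hE2sgn p h2
    linarith
  have hconst : ENNReal.ofReal ((2:ℝ) ^ (j - k - h + 3)) =
      ((8:ℝ≥0) : ℝ≥0∞) * ENNReal.ofReal ((2:ℝ) ^ (j - k - h)) := by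
    rw [two_zpow_add' (j - k - h) 3, show ((2:ℝ) ^ (3:ℤ)) = 8 from by norm_num, mul_comm,
      ENNReal.ofReal_mul (by norm_num)]
    norm_num
  calc volume L ≤ volume (L ∩ {p : Pt n | 0 < (1:ℝ) * (p.2 - c.2)}) +
        volume (L ∩ {p : Pt n | 0 < (-1:ℝ) * (p.2 - c.2)}) :=
        le_trans (measure_mono hsplit) (measure_union_le _ _)
    _ ≤ ENNReal.ofReal ((2:ℝ) ^ (j - k - h + 3)) * volume E1 +
        ENNReal.ofReal ((2:ℝ) ^ (j - k - h + 3)) * volume E2 := add_le_add hE1vol hE2vol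
    _ = ENNReal.ofReal ((2:ℝ) ^ (j - k - h + 3)) * (volume E1 + volume E2) := (mul_add _ _ _).symm
    _ = ENNReal.ofReal ((2:ℝ) ^ (j - k - h + 3)) * volume (E1 ∪ E2) := by
        rw [measure_union hdisj hE2m]
    _ ≤ ENNReal.ofReal ((2:ℝ) ^ (j - k - h + 3)) * volume R :=
        mul_le_mul_right (measure_mono (Set.union_subset hE1sub hE2sub)) _
    _ = ((8:ℝ≥0) : ℝ≥0∞) * ENNReal.ofReal ((2:ℝ) ^ (j - k - h)) * volume R := by
        rw [hconst, mul_assoc]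


end
end

section
/- Let n ≥ 2 be an integer and 0 < α < n. There exists a constant C = C(n, α, C₀) such that for every nonnegative measurable f on ℝ^{n+1}, every integer ℓ with 0 ≤ ℓ ≤ η, every j ∈ ℤ and every (x,t) ∈ ℝ^{n+1}, (Δ_{ℓj} I_α f)(x,t) ≤ C (2^{j−ℓ} 2^{jn})^{α/n} (M_η f)(x,t). -/
open MeasureTheory ENNReal NNReal

noncomputable section

theorem stmt9 (n : ℕ) (hn : 2 ≤ n) (α : ℝ) (hα0 : 0 < α) (hαn : α < n)
    (C₀ : ℝ) (hC₀ : 1 ≤ C₀) :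
    ∃ C : ℝ≥0, 0 < C ∧ ∀ (η : ℕ), 1 ≤ η →
      ∀ (ι : Type) [Fintype ι] (y : ι → EuclideanSpace ℝ (Fin n)),
      (∀ ν, ‖y ν‖ = 1) →
      (∀ w : EuclideanSpace ℝ (Fin n), w ≠ 0 → ∃ ν, w ∈ coneDir n η (y ν)) →
      ((Fintype.card ι : ℝ) ≤ C₀ * (2:ℝ) ^ ((η:ℤ) * ((n:ℤ) - 1))) →
      ∀ f : Pt n → ℝ, Measurable f → (∀ z, 0 ≤ f z) →
      ∀ (ℓ : ℕ), ℓ ≤ η → ∀ (j : ℤ) (z : Pt n),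
        Dlj n α (ℓ:ℤ) j f z ≤
          C * ENNReal.ofReal (((2:ℝ) ^ (j - (ℓ:ℤ)) * (2:ℝ) ^ (j * (n:ℤ))) ^ (α / n)) *
            Meta n η y f z := by
  refine ⟨1, one_pos, ?_⟩
  intro η hη ι _ y hynorm hcover hcard f hf hf0 ℓ hℓ j z
  have hn0 : (0:ℝ) < (n:ℝ) := by exact_mod_cast Nat.cast_pos.mpr (by omega)
  -- notation
  set g : Pt n → ℝ≥0∞ := fun p => ENNReal.ofReal (f (z.1 - p.1, z.2 - p.2)) with hg
  have hgmeas : Measurable g := by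
    apply Measurable.ennreal_ofReal
    exact hf.comp (by fun_prop)
  set K : ℝ≥0∞ :=
    ENNReal.ofReal (((2:ℝ)^j) ^ (α - n) * ((2:ℝ)^(j - (ℓ:ℤ))) ^ (α / n - 1)) with hK
  set A : ℝ≥0∞ := ENNReal.ofReal
    ((2:ℝ) ^ j * (2:ℝ) ^ (j - (ℓ:ℤ)) * (2:ℝ) ^ ((j - (η:ℤ)) * ((n:ℤ) - 1))) with hA
  set B : ℝ≥0∞ := ENNReal.ofReal ((2:ℝ) ^ ((η:ℤ) * ((n:ℤ) - 1))) with hB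
  have hA0 : A ≠ 0 := by
    rw [hA]; exact (ENNReal.ofReal_pos.mpr (by positivity)).ne'
  have hAtop : A ≠ ⊤ := by rw [hA]; exact ENNReal.ofReal_ne_top
  have hB0 : B ≠ 0 := by
    rw [hB]; exact (ENNReal.ofReal_pos.mpr (by positivity)).ne'
  have hBtop : B ≠ ⊤ := by rw [hB]; exact ENNReal.ofReal_ne_top
  -- measurability of the shell
  have hmu : Measurable fun p : Pt n => |p.2 - (0:Pt n).2| + ‖p.1 - (0:Pt n).1‖ := by fun_prop
  have hmv : Measurable fun p : Pt n => |p.2 - (0:Pt n).2| - ‖p.1 - (0:Pt n).1‖ := by fun_prop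
  have hSmeas : MeasurableSet (shell n (ℓ:ℤ) j) := by
    unfold shell shellAt
    exact (measurableSet_le measurable_const hmu).inter
      ((measurableSet_lt hmu measurable_const).inter
        ((measurableSet_le measurable_const hmv).inter (measurableSet_lt hmv measurable_const)))
  -- Step 1: kernel bound on the shell
  have step1 : Dlj n α (ℓ:ℤ) j f z ≤ (∫⁻ p in shell n (ℓ:ℤ) j, g p) * K := by
    rw [← lintegral_mul_const K hgmeas]
    refine setLIntegral_mono' hSmeas ?_
    intro p hp
    simp only [shell, shellAt, Set.mem_setOf_eq, Prod.snd_zero, Prod.fst_zero, sub_zero] at hp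
    obtain ⟨h1, h2, h3, h4⟩ := hp
    have h2j : (0:ℝ) < (2:ℝ)^j := by positivity
    have h2jl : (0:ℝ) < (2:ℝ)^(j - (ℓ:ℤ)) := by positivity
    have hαn' : α - (n:ℝ) ≤ 0 := by linarith
    have hαdn : α / (n:ℝ) - 1 ≤ 0 := by
      have : α / (n:ℝ) < 1 := (div_lt_one hn0).mpr hαn
      linarith
    unfold ker
    refine mul_le_mul_right ?_ _
    rw [hK]
    refine ENNReal.ofReal_le_ofReal ?_
    refine mul_le_mul (Real.rpow_le_rpow_of_nonpos h2j h1 hαn')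
      (Real.rpow_le_rpow_of_nonpos h2jl h3 hαdn)
      (Real.rpow_nonneg (by linarith) _) (Real.rpow_nonneg (by positivity) _)
  -- Step 2: covering by cones
  set T : ι → Set (Pt n) :=
    fun ν => {p : Pt n | p ∈ shell n (ℓ:ℤ) j ∧ p.1 ∈ coneDir n η (y ν)} with hT
  have hZ : volume {p : Pt n | p.1 = 0} = 0 := by
    haveI : Nonempty (Fin n) := ⟨⟨0, by omega⟩⟩
    haveI : Nontrivial (EuclideanSpace ℝ (Fin n)) := by
      refine ⟨0, EuclideanSpace.single ⟨0, by omega⟩ 1, fun h => ?_⟩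
      have := congrArg (fun w : EuclideanSpace ℝ (Fin n) => w ⟨0, by omega⟩) h
      simp [EuclideanSpace.single_apply] at this
    have hset : {p : Pt n | p.1 = 0}
        = ({0} : Set (EuclideanSpace ℝ (Fin n))) ×ˢ (Set.univ : Set ℝ) := by
      ext p; simp [Set.mem_prod, Prod.ext_iff, eq_comm]
    rw [hset, Measure.volume_eq_prod, Measure.prod_prod, measure_singleton, zero_mul]
  have hcov : shell n (ℓ:ℤ) j ⊆ (⋃ ν, T ν) ∪ {p : Pt n | p.1 = 0} := by
    intro p hp
    by_cases h0 : p.1 = 0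
    · exact Or.inr h0
    · obtain ⟨ν, hν⟩ := hcover p.1 h0
      exact Or.inl (Set.mem_iUnion.mpr ⟨ν, hp, hν⟩)
  have step2 : (∫⁻ p in shell n (ℓ:ℤ) j, g p) ≤ ∑ ν, ∫⁻ p in T ν, g p := by
    calc (∫⁻ p in shell n (ℓ:ℤ) j, g p)
        ≤ ∫⁻ p in (⋃ ν, T ν) ∪ {p : Pt n | p.1 = 0}, g p := lintegral_mono_set hcov
      _ ≤ (∫⁻ p in ⋃ ν, T ν, g p) + ∫⁻ p in {p : Pt n | p.1 = 0}, g p :=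
          lintegral_union_le _ _ _
      _ = ∫⁻ p in ⋃ ν, T ν, g p := by
          rw [setLIntegral_measure_zero _ _ hZ, add_zero]
      _ ≤ ∑' ν, ∫⁻ p in T ν, g p := lintegral_iUnion_le _ _
      _ = ∑ ν, ∫⁻ p in T ν, g p := tsum_fintype _
  -- Step 3: bound each cone piece by the directional maximal function
  have step3 : ∀ ν, (∫⁻ p in T ν, g p) ≤ A * Mnu n η (y ν) f z := by
    intro ν
    have hle : A⁻¹ * (∫⁻ p in T ν, g p) ≤ Mnu n η (y ν) f z := by
      unfold Mnu
      refine le_iSup_of_le ℓ (le_iSup_of_le hℓ (le_iSup_of_le j ?_))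
      rw [hA]
    calc (∫⁻ p in T ν, g p) = A * (A⁻¹ * (∫⁻ p in T ν, g p)) := by
          rw [← mul_assoc, ENNReal.mul_inv_cancel hA0 hAtop, one_mul]
      _ ≤ A * Mnu n η (y ν) f z := mul_le_mul_right hle A
  -- relate the sum to Meta
  have hsum : (∑ ν, Mnu n η (y ν) f z) = B * Meta n η y f z := by
    unfold Meta
    rw [← hB, ← mul_assoc, ENNReal.mul_inv_cancel hB0 hBtop, one_mul]
  -- constant arithmetic
  have hconst : K * A * B
      = ENNReal.ofReal (((2:ℝ) ^ (j - (ℓ:ℤ)) * (2:ℝ) ^ (j * (n:ℤ))) ^ (α / n)) := by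
    rw [hK, hA, hB, ← ENNReal.ofReal_mul (by positivity), ← ENNReal.ofReal_mul (by positivity)]
    congr 1
    have h1 : (0:ℝ) ≤ 2 := by norm_num
    have e1 : ∀ k : ℤ, (2:ℝ)^k = (2:ℝ) ^ ((k:ℤ):ℝ) := fun k => (Real.rpow_intCast 2 k).symm
    rw [e1 j, e1 (j - (ℓ:ℤ)), e1 ((j - (η:ℤ)) * ((n:ℤ) - 1)), e1 ((η:ℤ) * ((n:ℤ) - 1)),
      e1 (j * (n:ℤ)), ← Real.rpow_mul h1, ← Real.rpow_mul h1, ← Real.rpow_add (by norm_num),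
      ← Real.rpow_add (by norm_num), ← Real.rpow_add (by norm_num),
      ← Real.rpow_add (by norm_num), ← Real.rpow_add (by norm_num), ← Real.rpow_add (by norm_num : (0:ℝ)<2), ← Real.rpow_mul h1]
    congr 1
    push_cast
    field_simp
    ring
  -- combine
  calc Dlj n α (ℓ:ℤ) j f z
      ≤ (∫⁻ p in shell n (ℓ:ℤ) j, g p) * K := step1
    _ ≤ (∑ ν, ∫⁻ p in T ν, g p) * K := mul_le_mul_left step2 K
    _ ≤ (∑ ν, A * Mnu n η (y ν) f z) * K :=
        mul_le_mul_left (Finset.sum_le_sum fun ν _ => step3 ν) K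
    _ = (A * ∑ ν, Mnu n η (y ν) f z) * K := by rw [Finset.mul_sum]
    _ = (A * (B * Meta n η y f z)) * K := by rw [hsum]
    _ = (K * A * B) * Meta n η y f z := by ring
    _ = (1:ℝ≥0) * ENNReal.ofReal (((2:ℝ) ^ (j - (ℓ:ℤ)) * (2:ℝ) ^ (j * (n:ℤ))) ^ (α / n)) *
          Meta n η y f z := by rw [hconst, ENNReal.coe_one, one_mul]

end
end

section
/- Let n ≥ 1 be an integer, 0 < α < n and 1 < p < ∞. There exists a constant C = C(n, α, p) such that for every nonnegative f ∈ L^p(ℝ^{n+1}) with ‖f‖_{L^p} > 0, every integer ℓ ≥ 0, every j ∈ ℤ and every (x,t) ∈ ℝ^{n+1}, (Δ_{ℓj} I_α f)(x,t) ≤ C θ_ℓ(x,t)^{1/p} ‖f‖_{L^p(ℝ^{n+1})} (2^{j−ℓ} 2^{jn})^{α/n − 1/p}. -/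
open MeasureTheory ENNReal NNReal

noncomputable section

/-!
On `Λ_{ℓj}` we have `|s|+|y| ≈ 2^j` and `|s|-|y| ≈ 2^{j-ℓ}`, so the kernel is essentially the
constant `A^{α/n-1}` with `A = 2^{j-ℓ} 2^{jn}`, while slicing in `s` shows `|Λ_{ℓj}| ≲ A`.
Hölder's inequality (`1/p + 1/q = 1`) on `Λ_{ℓj} ⊆ Λ_ℓ` then gives
`Δ_{ℓj} I_α f ≤ A^{α/n-1} (θ_ℓ ‖f‖_p^p)^{1/p} |Λ_{ℓj}|^{1/q} ≲ θ_ℓ^{1/p} ‖f‖_p A^{α/n-1/p}`.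
-/

lemma setLIntegral_le_lintegral_rpow_mul_measure_rpow {X : Type*} [MeasurableSpace X]
    {μ : Measure X} {s : Set X} {F : X → ℝ≥0∞} (hF : AEMeasurable F (μ.restrict s))
    {p q : ℝ} (hpq : p.HolderConjugate q) :
    ∫⁻ x in s, F x ∂μ ≤ (∫⁻ x in s, F x ^ p ∂μ) ^ (1 / p) * μ s ^ (1 / q) := by
  simpa using
    ENNReal.lintegral_mul_le_Lp_mul_Lq (μ.restrict s) hpq hF aemeasurable_const (g := 1)

lemma volume_setOf_abs_mem_Ico_le (a b : ℝ) :
    volume {s : ℝ | |s| ∈ Set.Ico a b} ≤ 2 * ENNReal.ofReal (b - a) := by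
  have hsub : {s : ℝ | |s| ∈ Set.Ico a b} ⊆ Set.Icc (-b) (-a) ∪ Set.Icc a b := by
    rintro s ⟨ha, hb⟩
    rcases abs_cases s with ⟨hs, -⟩ | ⟨hs, -⟩ <;> rw [hs] at ha hb
    · exact Or.inr ⟨by linarith, by linarith⟩
    · exact Or.inl ⟨by linarith, by linarith⟩
  calc volume {s : ℝ | |s| ∈ Set.Ico a b}
      ≤ volume (Set.Icc (-b) (-a)) + volume (Set.Icc a b) :=
        (measure_mono hsub).trans (measure_union_le _ _)
    _ = 2 * ENNReal.ofReal (b - a) := by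
        rw [Real.volume_Icc, Real.volume_Icc, two_mul, neg_sub_neg]

lemma mem_shell_iff {n : ℕ} {ℓ j : ℤ} {w : Pt n} :
    w ∈ shell n ℓ j ↔ (2:ℝ) ^ j ≤ |w.2| + ‖w.1‖ ∧ |w.2| + ‖w.1‖ < (2:ℝ) ^ (j + 1) ∧
      (2:ℝ) ^ (j - ℓ) ≤ |w.2| - ‖w.1‖ ∧ |w.2| - ‖w.1‖ < (2:ℝ) ^ (j - ℓ + 1) := by
  simp [shell, shellAt]

lemma measurableSet_shell (n : ℕ) (ℓ j : ℤ) : MeasurableSet (shell n ℓ j) := by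
  have hsum : Measurable fun w : Pt n => |w.2| + ‖w.1‖ :=
    measurable_snd.abs.add measurable_fst.norm
  have hdiff : Measurable fun w : Pt n => |w.2| - ‖w.1‖ :=
    measurable_snd.abs.sub measurable_fst.norm
  have : shell n ℓ j = (fun w : Pt n => |w.2| + ‖w.1‖) ⁻¹' Set.Ico (2 ^ j) (2 ^ (j + 1)) ∩
      (fun w : Pt n => |w.2| - ‖w.1‖) ⁻¹' Set.Ico (2 ^ (j - ℓ)) (2 ^ (j - ℓ + 1)) := by
    ext w; simp [mem_shell_iff, and_assoc]
  rw [this]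
  exact (hsum measurableSet_Ico).inter (hdiff measurableSet_Ico)

lemma volume_shell_le {n : ℕ} (ℓ j : ℤ) :
    volume (shell n ℓ j) ≤ 2 ^ (n + 1) * volume (Metric.ball (0 : EuclideanSpace ℝ (Fin n)) 1) *
      ENNReal.ofReal ((2:ℝ) ^ (j - ℓ) * (2:ℝ) ^ (j * (n:ℤ))) := by
  set h : ℝ := 2 ^ (j - ℓ)
  set R : ℝ := 2 ^ (j + 1)
  have hslice : ∀ y, volume (Prod.mk y ⁻¹' shell n ℓ j) ≤
      (Metric.ball 0 R).indicator (fun _ => 2 * ENNReal.ofReal h) y := by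
    intro y
    by_cases hy : y ∈ Metric.ball 0 R
    · rw [Set.indicator_of_mem hy]
      have hsub : Prod.mk y ⁻¹' shell n ℓ j ⊆ {s : ℝ | |s| ∈ Set.Ico (h + ‖y‖) (2 * h + ‖y‖)} := by
        intro s hs
        obtain ⟨-, -, h3, h4⟩ := mem_shell_iff.1 hs
        rw [zpow_add_one₀ two_ne_zero] at h4
        exact ⟨by linarith, by linarith⟩
      refine (measure_mono hsub).trans ((volume_setOf_abs_mem_Ico_le _ _).trans_eq ?_)
      ring_nf
    · rw [Set.indicator_of_notMem hy, nonpos_iff_eq_zero, measure_eq_zero_iff_ae_notMem]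
      refine ae_of_all _ fun s hs => hy ?_
      obtain ⟨-, h2, -, -⟩ := mem_shell_iff.1 hs
      rw [mem_ball_zero_iff]
      linarith [abs_nonneg s]
  have hpow : (2 * h) * R ^ n = 2 ^ (n + 1) * (h * (2:ℝ) ^ (j * (n:ℤ))) := by
    rw [← zpow_natCast R, ← zpow_mul, add_mul, one_mul, zpow_add₀ two_ne_zero, zpow_natCast]
    ring
  calc volume (shell n ℓ j)
      = ∫⁻ y, volume (Prod.mk y ⁻¹' shell n ℓ j) := by
        rw [Measure.volume_eq_prod, Measure.prod_apply (measurableSet_shell n ℓ j)]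
    _ ≤ ∫⁻ y, (Metric.ball 0 R).indicator (fun _ => 2 * ENNReal.ofReal h) y := lintegral_mono hslice
    _ = 2 * ENNReal.ofReal h *
          (ENNReal.ofReal (R ^ n) * volume (Metric.ball (0 : EuclideanSpace ℝ (Fin n)) 1)) := by
        rw [lintegral_indicator_const measurableSet_ball,
          Measure.addHaar_ball_of_pos _ _ (by positivity),
          finrank_euclideanSpace_fin]
    _ = _ := by
        have hconst : 2 * ENNReal.ofReal h * ENNReal.ofReal (R ^ n) =
            2 ^ (n + 1) * ENNReal.ofReal (h * (2:ℝ) ^ (j * (n:ℤ))) := by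
          rw [← ENNReal.ofReal_ofNat 2, ← ENNReal.ofReal_mul zero_le_two,
            ← ENNReal.ofReal_mul (by positivity), hpow, ENNReal.ofReal_mul (by positivity),
            ENNReal.ofReal_pow zero_le_two]
        rw [← mul_assoc, hconst]
        ring

lemma Om_le_of_mem_shell {n : ℕ} (hn : 1 ≤ n) {α : ℝ} (hαn : α ≤ n) {ℓ j : ℤ} {w : Pt n}
    (hw : w ∈ shell n ℓ j) :
    Om n α w ≤ ENNReal.ofReal (((2:ℝ) ^ (j - ℓ) * (2:ℝ) ^ (j * (n:ℤ))) ^ (α / n - 1)) := by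
  have hn0 : (0:ℝ) < n := by exact_mod_cast hn
  have hexp : α / n - 1 ≤ 0 := by rw [sub_nonpos, div_le_one hn0]; exact hαn
  obtain ⟨hsum, -, hdiff, -⟩ := mem_shell_iff.1 hw
  have hsum_pow : ((2:ℝ) ^ j) ^ (α - n) = ((2:ℝ) ^ (j * (n:ℤ))) ^ (α / n - 1) := by
    rw [zpow_mul, zpow_natCast, ← Real.rpow_natCast, ← Real.rpow_mul (by positivity)]
    congr 1
    field_simp
  have h2j : (0:ℝ) < 2 ^ j := by positivity
  have h2jl : (0:ℝ) < 2 ^ (j - ℓ) := by positivity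
  rw [Om, Real.mul_rpow (by positivity) (by positivity), mul_comm, ← hsum_pow]
  exact ENNReal.ofReal_le_ofReal <| mul_le_mul
    (Real.rpow_le_rpow_of_nonpos h2jl hdiff hexp)
    (Real.rpow_le_rpow_of_nonpos h2j hsum (by linarith))
    (Real.rpow_nonneg (h2j.le.trans hsum) _) (Real.rpow_nonneg h2jl.le _)

lemma Dlj_le_mul_setLIntegral {n : ℕ} (hn : 1 ≤ n) {α : ℝ} (hαn : α ≤ n) (ℓ j : ℤ)
    (f : Pt n → ℝ) (z : Pt n) :
    Dlj n α ℓ j f z ≤ ENNReal.ofReal (((2:ℝ) ^ (j - ℓ) * (2:ℝ) ^ (j * (n:ℤ))) ^ (α / n - 1)) *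
      ∫⁻ w in shell n ℓ j, ENNReal.ofReal (f (z.1 - w.1, z.2 - w.2)) := by
  rw [Dlj, ← lintegral_const_mul' _ _ ENNReal.ofReal_ne_top]
  refine setLIntegral_mono' (measurableSet_shell n ℓ j) fun w hw => ?_
  rw [mul_comm]
  exact mul_le_mul_right (Om_le_of_mem_shell hn hαn hw) _

lemma setLIntegral_shell_rpow_le_theta {n : ℕ} {p : ℝ} (hp : 0 < p) {f : Pt n → ℝ}
    (hf0 : eLpNorm f (ENNReal.ofReal p) volume ≠ 0)
    (hftop : eLpNorm f (ENNReal.ofReal p) volume ≠ ⊤)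
    (ℓ j : ℤ) (z : Pt n) :
    (∫⁻ w in shell n ℓ j, ENNReal.ofReal (f (z.1 - w.1, z.2 - w.2)) ^ p) ^ (1 / p) ≤
      theta n p f ℓ z ^ (1 / p) * eLpNorm f (ENNReal.ofReal p) volume := by
  set N := eLpNorm f (ENNReal.ofReal p) volume
  have htheta : theta n p f ℓ z * N ^ p =
      ∫⁻ w in Lam n ℓ, ENNReal.ofReal (f (z.1 - w.1, z.2 - w.2)) ^ p :=
    ENNReal.div_mul_cancel (ENNReal.rpow_pos (pos_iff_ne_zero.2 hf0) hftop).ne'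
      (ENNReal.rpow_ne_top_of_nonneg hp.le hftop)
  calc (∫⁻ w in shell n ℓ j, ENNReal.ofReal (f (z.1 - w.1, z.2 - w.2)) ^ p) ^ (1 / p)
      ≤ (theta n p f ℓ z * N ^ p) ^ (1 / p) := by
        rw [htheta]
        gcongr
        exact Set.subset_iUnion (shell n ℓ) j
    _ = theta n p f ℓ z ^ (1 / p) * N := by
        rw [ENNReal.mul_rpow_of_nonneg _ _ (by positivity), ← ENNReal.rpow_mul,
          mul_one_div_cancel hp.ne', ENNReal.rpow_one]

lemma Dlj_le_theta_rpow_mul_eLpNorm {n : ℕ} (hn : 1 ≤ n) {α : ℝ} (hαn : α ≤ n) {p q : ℝ}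
    (hpq : p.HolderConjugate q) {f : Pt n → ℝ} (hf : Measurable f)
    (hfp : MemLp f (ENNReal.ofReal p) volume) (hf0 : eLpNorm f (ENNReal.ofReal p) volume ≠ 0)
    (ℓ j : ℤ) (z : Pt n) :
    Dlj n α ℓ j f z ≤
      (2 ^ (n + 1) * volume (Metric.ball (0 : EuclideanSpace ℝ (Fin n)) 1)) ^ (1 / q) *
        theta n p f ℓ z ^ (1 / p) * eLpNorm f (ENNReal.ofReal p) volume *
          ENNReal.ofReal (((2:ℝ) ^ (j - ℓ) * (2:ℝ) ^ (j * (n:ℤ))) ^ (α / n - 1 / p)) := by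
  set A : ℝ := 2 ^ (j - ℓ) * 2 ^ (j * (n:ℤ))
  have hA : 0 < A := by positivity
  have hF : Measurable fun w : Pt n => ENNReal.ofReal (f (z.1 - w.1, z.2 - w.2)) :=
    (hf.comp ((measurable_const.sub measurable_fst).prodMk
      (measurable_const.sub measurable_snd))).ennreal_ofReal
  have hexp : ENNReal.ofReal (A ^ (α / n - 1)) * ENNReal.ofReal A ^ (1 / q) =
      ENNReal.ofReal (A ^ (α / n - 1 / p)) := by
    rw [ENNReal.ofReal_rpow_of_pos hA, ← ENNReal.ofReal_mul (by positivity), ← Real.rpow_add hA,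
      one_div q, ← hpq.one_sub_inv]
    ring_nf
  calc Dlj n α ℓ j f z
      ≤ ENNReal.ofReal (A ^ (α / n - 1)) *
          ∫⁻ w in shell n ℓ j, ENNReal.ofReal (f (z.1 - w.1, z.2 - w.2)) :=
        Dlj_le_mul_setLIntegral hn hαn ℓ j f z
    _ ≤ ENNReal.ofReal (A ^ (α / n - 1)) *
          ((∫⁻ w in shell n ℓ j, ENNReal.ofReal (f (z.1 - w.1, z.2 - w.2)) ^ p) ^ (1 / p) *
            volume (shell n ℓ j) ^ (1 / q)) := by
        gcongr
        exact setLIntegral_le_lintegral_rpow_mul_measure_rpow hF.aemeasurable hpq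
    _ ≤ ENNReal.ofReal (A ^ (α / n - 1)) *
          ((theta n p f ℓ z ^ (1 / p) * eLpNorm f (ENNReal.ofReal p) volume) *
            (2 ^ (n + 1) * volume (Metric.ball (0 : EuclideanSpace ℝ (Fin n)) 1) *
              ENNReal.ofReal A) ^ (1 / q)) := by
        gcongr
        · exact setLIntegral_shell_rpow_le_theta hpq.pos hf0 hfp.eLpNorm_ne_top ℓ j z
        · simp [hpq.symm.nonneg]
        · exact volume_shell_le ℓ j
    _ = _ := by
        rw [ENNReal.mul_rpow_of_nonneg _ _ (by simp [hpq.symm.nonneg]), ← hexp]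
        ring

theorem stmt10_general (n : ℕ) (hn : 1 ≤ n) (α : ℝ) (hαn : α < n)
    (p : ℝ) (hp : 1 < p) :
    ∃ C : ℝ≥0, 0 < C ∧ ∀ f : Pt n → ℝ, Measurable f → (∀ z, 0 ≤ f z) →
      MemLp f (ENNReal.ofReal p) volume → eLpNorm f (ENNReal.ofReal p) volume ≠ 0 →
      ∀ (ℓ : ℕ) (j : ℤ) (z : Pt n),
        Dlj n α (ℓ:ℤ) j f z ≤
          C * theta n p f (ℓ:ℤ) z ^ (1 / p) * eLpNorm f (ENNReal.ofReal p) volume *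
            ENNReal.ofReal
              (((2:ℝ) ^ (j - (ℓ:ℤ)) * (2:ℝ) ^ (j * (n:ℤ))) ^ (α / n - 1 / p)) := by
  obtain ⟨q, hpq⟩ : ∃ q, p.HolderConjugate q := ⟨_, .conjExponent hp⟩
  set c : ℝ≥0∞ := 2 ^ (n + 1) * volume (Metric.ball (0 : EuclideanSpace ℝ (Fin n)) 1)
  have hc0 : c ≠ 0 := mul_ne_zero (by simp) (Metric.measure_ball_pos _ _ one_pos).ne'
  have hctop : c ≠ ⊤ := ENNReal.mul_ne_top (by simp) measure_ball_lt_top.ne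
  have hCtop : c ^ (1 / q) ≠ ⊤ := ENNReal.rpow_ne_top_of_nonneg (by simp [hpq.symm.nonneg]) hctop
  refine ⟨(c ^ (1 / q)).toNNReal,
    ENNReal.toNNReal_pos (ENNReal.rpow_pos (pos_iff_ne_zero.2 hc0) hctop).ne' hCtop, ?_⟩
  intro f hf _ hfp hf0 ℓ j z
  rw [ENNReal.coe_toNNReal hCtop]
  exact Dlj_le_theta_rpow_mul_eLpNorm hn hαn.le hpq hf hfp hf0 ℓ j z

theorem stmt10 (n : ℕ) (hn : 1 ≤ n) (α : ℝ) (hα0 : 0 < α) (hαn : α < n)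
    (p : ℝ) (hp : 1 < p) :
    ∃ C : ℝ≥0, 0 < C ∧ ∀ f : Pt n → ℝ, Measurable f → (∀ z, 0 ≤ f z) →
      MemLp f (ENNReal.ofReal p) volume → eLpNorm f (ENNReal.ofReal p) volume ≠ 0 →
      ∀ (ℓ : ℕ) (j : ℤ) (z : Pt n),
        Dlj n α (ℓ:ℤ) j f z ≤
          C * theta n p f (ℓ:ℤ) z ^ (1 / p) * eLpNorm f (ENNReal.ofReal p) volume *
            ENNReal.ofReal
              (((2:ℝ) ^ (j - (ℓ:ℤ)) * (2:ℝ) ^ (j * (n:ℤ))) ^ (α / n - 1 / p)) :=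
  stmt10_general n hn α hαn p hp
end
end

section
/- Let (X, μ) be a measure space, let q ≥ 2 be an integer, let h_1, …, h_{q−1} be nonnegative integers with h = max_i h_i, and for each ℓ ∈ ℤ let a_ℓ : X → [0, ∞] be measurable. Then ∫_X Σ_{ℓ ≥ h} a_ℓ(x) ∏_{i=1}^{q−1} a_{ℓ−h_i}(x) dμ(x) ≤ ∏_{i=1}^{q−1} ( ∫_X Σ_{ℓ ≥ h} a_ℓ(x) (a_{ℓ−h_i}(x))^{q−1} dμ(x) )^{1/(q−1)}. -/
open MeasureTheory ENNReal NNReal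

noncomputable section

theorem stmt14 {X : Type} [MeasurableSpace X] (μ : Measure X) (q : ℕ) (hq : 2 ≤ q)
    (hs : Fin (q - 1) → ℕ) (h : ℕ) (hmax : ∀ i, hs i ≤ h) (hex : ∃ i, hs i = h)
    (a : ℤ → X → ℝ≥0∞) (ha : ∀ ℓ, Measurable (a ℓ)) :
    ∫⁻ x, ∑' m : ℕ, a ((h:ℤ) + m) x * ∏ i, a ((h:ℤ) + m - hs i) x ∂μ ≤
      ∏ i, (∫⁻ x, ∑' m : ℕ, a ((h:ℤ) + m) x * a ((h:ℤ) + m - hs i) x ^ ((q:ℝ) - 1) ∂μ) ^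
        (1 / ((q:ℝ) - 1)) := by
  set r : ℝ := (q:ℝ) - 1 with hr_def
  have hq1 : 1 ≤ q := le_trans one_le_two hq
  have hcast : ((q - 1 : ℕ) : ℝ) = r := by
    rw [Nat.cast_sub hq1]; simp [hr_def]
  have hr1 : (1:ℝ) ≤ r := by
    have : (2:ℝ) ≤ (q:ℝ) := by exact_mod_cast hq
    linarith
  have hr0 : (0:ℝ) < r := lt_of_lt_of_le one_pos hr1
  have hsum : ∑ _i : Fin (q - 1), 1 / r = 1 := by
    rw [Finset.sum_const, Finset.card_univ, Fintype.card_fin, nsmul_eq_mul, hcast]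
    field_simp
  -- pointwise factorization
  have key : ∀ (b : ℝ≥0∞) (c : Fin (q-1) → ℝ≥0∞),
      b * ∏ i, c i = ∏ i, (b * c i ^ r) ^ (1 / r) := by
    intro b c
    have h1 : ∀ i, (b * c i ^ r) ^ (1 / r) = b ^ (1 / r) * c i := by
      intro i
      rw [ENNReal.mul_rpow_of_nonneg _ _ (by positivity), ← ENNReal.rpow_mul,
        mul_one_div_cancel hr0.ne', ENNReal.rpow_one]
    simp only [h1]
    rw [Finset.prod_mul_distrib, Finset.prod_const, Finset.card_univ, Fintype.card_fin,
      ← ENNReal.rpow_natCast (b ^ (1/r)), ← ENNReal.rpow_mul, hcast,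
      one_div_mul_cancel hr0.ne', ENNReal.rpow_one]
  calc ∫⁻ x, ∑' m : ℕ, a ((h:ℤ) + m) x * ∏ i, a ((h:ℤ) + m - hs i) x ∂μ
      ≤ ∫⁻ x, ∏ i, (∑' m : ℕ, a ((h:ℤ) + m) x * a ((h:ℤ) + m - hs i) x ^ r) ^ (1/r) ∂μ := by
        refine lintegral_mono fun x => ?_
        have := ENNReal.lintegral_prod_norm_pow_le (μ := Measure.count) Finset.univ
          (f := fun (i : Fin (q-1)) (m : ℕ) =>
            a ((h:ℤ) + m) x * a ((h:ℤ) + m - hs i) x ^ r)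
          (fun i _ => (measurable_of_countable _).aemeasurable)
          (p := fun _ => 1 / r) hsum (fun i _ => by positivity)
        simp only [lintegral_count] at this
        calc ∑' m : ℕ, a ((h:ℤ) + m) x * ∏ i, a ((h:ℤ) + m - hs i) x
            = ∑' m : ℕ, ∏ i, (a ((h:ℤ) + m) x * a ((h:ℤ) + m - hs i) x ^ r) ^ (1/r) := by
              exact tsum_congr fun m => key _ _
          _ ≤ ∏ i, (∑' m : ℕ, a ((h:ℤ) + m) x * a ((h:ℤ) + m - hs i) x ^ r) ^ (1/r) := this
    _ ≤ ∏ i, (∫⁻ x, ∑' m : ℕ, a ((h:ℤ) + m) x * a ((h:ℤ) + m - hs i) x ^ r ∂μ) ^ (1/r) := by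
        refine ENNReal.lintegral_prod_norm_pow_le Finset.univ ?_ hsum (fun i _ => by positivity)
        intro i _
        exact (Measurable.ennreal_tsum fun m =>
          ((ha _).mul ((ha _).pow_const _))).aemeasurable

end
end

section
/- Let n ≥ 1, q ≥ 2, ℓ ≥ h ≥ 0 be integers, let k_1, …, k_{q−1} ∈ ℤ and set k = min{k_1, …, k_{q−1}}. Let (x^1,t^1), …, (x^{q−1},t^{q−1}) ∈ ℝ^n × ℝ and suppose (y,s) ∈ ⋂_{i=1}^{q−1} Λ_{ℓ−h, k_i}(x^i,t^i). Then the Euclidean ball in ℝ^{n+1} of radius 2^{k−(ℓ−h)−1} centered at (y,s) is contained in ⋂_{i=1}^{q−1} Λ*_{ℓ−h, k_i}(x^i,t^i). -/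
open MeasureTheory ENNReal NNReal

noncomputable section

theorem stmt15 (n : ℕ) (hn : 1 ≤ n) (q : ℕ) (hq : 2 ≤ q) (ℓ h : ℤ) (h0 : 0 ≤ h)
    (hlh : h ≤ ℓ) (κ : Fin (q - 1) → ℤ) (k : ℤ) (hk1 : ∀ i, k ≤ κ i) (hk2 : ∃ i, κ i = k)
    (ci : Fin (q - 1) → Pt n) (w : Pt n)
    (hw : w ∈ ⋂ i, shellAt n (ℓ - h) (κ i) (ci i)) :
    {p : Pt n | ‖p.1 - w.1‖ ^ 2 + (p.2 - w.2) ^ 2 < ((2:ℝ) ^ (k - (ℓ - h) - 1)) ^ 2} ⊆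
      ⋂ i, shellStarAt n (ℓ - h) (κ i) (ci i) := by
  intro p hp
  simp only [Set.mem_setOf_eq] at hp
  rw [Set.mem_iInter]
  intro i
  have hwi := Set.mem_iInter.1 hw i
  obtain ⟨h1, h2, h3, h4⟩ := hwi
  set c := ci i with hc
  set j := κ i with hj
  -- distances
  set d1 := ‖p.1 - w.1‖ with hd1
  set d2 := |p.2 - w.2| with hd2
  have hd1n : 0 ≤ d1 := norm_nonneg _
  have hd2n : 0 ≤ d2 := abs_nonneg _
  have hrpos : (0:ℝ) < (2:ℝ) ^ (k - (ℓ - h) - 1) := by positivity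
  have hp' : d1 ^ 2 + d2 ^ 2 < ((2:ℝ) ^ (k - (ℓ - h) - 1)) ^ 2 := by
    rw [hd2, sq_abs]; exact hp
  have hd : d1 + d2 < 3 / 2 * (2:ℝ) ^ (k - (ℓ - h) - 1) := by
    nlinarith [sq_nonneg (d1 - d2), sq_nonneg (d1 + d2)]
  -- triangle inequalities
  have ta : |(|p.2 - c.2| - |w.2 - c.2|)| ≤ d2 := by
    have := abs_abs_sub_abs_le_abs_sub (p.2 - c.2) (w.2 - c.2)
    have e : p.2 - c.2 - (w.2 - c.2) = p.2 - w.2 := by ring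
    rwa [e] at this
  have tb : |(‖p.1 - c.1‖ - ‖w.1 - c.1‖)| ≤ d1 := by
    have := abs_norm_sub_norm_le (p.1 - c.1) (w.1 - c.1)
    have e : p.1 - c.1 - (w.1 - c.1) = p.1 - w.1 := by
      abel
    rwa [e] at this
  obtain ⟨ta1, ta2⟩ := abs_le.1 ta
  obtain ⟨tb1, tb2⟩ := abs_le.1 tb
  -- zpow facts
  have h2ne : (2:ℝ) ≠ 0 := by norm_num
  have em1 : (2:ℝ) ^ (k - (ℓ - h) - 1) = (2:ℝ) ^ (k - (ℓ - h)) * (2:ℝ) ^ (-1:ℤ) := by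
    rw [← zpow_add₀ h2ne]; ring_nf
  have hd' : d1 + d2 < 3 / 4 * (2:ℝ) ^ (k - (ℓ - h)) := by
    rw [em1, show ((2:ℝ) ^ (-1:ℤ)) = 1 / 2 by norm_num] at hd; linarith
  have e1 : (2:ℝ) ^ (j + 1) = (2:ℝ) ^ j * 2 := by
    rw [zpow_add_one₀ h2ne]
  have e2 : (2:ℝ) ^ (j + 3) = (2:ℝ) ^ j * (2:ℝ) ^ (3:ℤ) := by
    rw [← zpow_add₀ h2ne]
  have e3 : (2:ℝ) ^ (j - 3) = (2:ℝ) ^ j * (2:ℝ) ^ (-3:ℤ) := by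
    rw [← zpow_add₀ h2ne]; ring_nf
  have e4 : (2:ℝ) ^ (j - (ℓ - h) + 1) = (2:ℝ) ^ (j - (ℓ - h)) * 2 := by
    rw [zpow_add_one₀ h2ne]
  have e5 : (2:ℝ) ^ (j - (ℓ - h) + 3) = (2:ℝ) ^ (j - (ℓ - h)) * (2:ℝ) ^ (3:ℤ) := by
    rw [← zpow_add₀ h2ne]
  have e6 : (2:ℝ) ^ (j - (ℓ - h) - 3) = (2:ℝ) ^ (j - (ℓ - h)) * (2:ℝ) ^ (-3:ℤ) := by
    rw [← zpow_add₀ h2ne]; ring_nf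
  have ev3 : (2:ℝ) ^ (3:ℤ) = 8 := by norm_num
  have evm3 : (2:ℝ) ^ (-3:ℤ) = 1 / 8 := by norm_num
  have evm1 : (2:ℝ) ^ (-1:ℤ) = 1 / 2 := by norm_num
  have m1 : (2:ℝ) ^ (k - (ℓ - h)) ≤ (2:ℝ) ^ (j - (ℓ - h)) :=
    zpow_le_zpow_right₀ one_le_two (by have := hk1 i; omega)
  have m2 : (2:ℝ) ^ (j - (ℓ - h)) ≤ (2:ℝ) ^ j :=
    zpow_le_zpow_right₀ one_le_two (by omega)
  have pj : (0:ℝ) < (2:ℝ) ^ j := by positivity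
  have pjm : (0:ℝ) < (2:ℝ) ^ (j - (ℓ - h)) := by positivity
  refine ⟨?_, ?_, ?_, ?_⟩
  · rw [e3, evm3]; linarith
  · rw [e2, ev3]; linarith
  · rw [e6, evm3]; linarith
  · rw [e5, ev3]; linarith

end
end
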